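/- arXiv:1808.03229 — 5 statements merged into one kernel-verified Lean document; each statement's English description precedes it below -/
import Mathlib

section
/- Halley's method applied to f(x) = x² + 1 gives the iteration x_{n+1} = (x_n³ - 3x_n)/(3x_n² - 1); consequently if x₀ = cot θ₀ and all iterates are defined, then x_n = cot(3ⁿ θ₀). -/
open Real

/-!
For `f(x) = x² + 1` the Halley step is the rational map `x ↦ (x³ - 3x)/(3x² - 1)`, which is
exactly the triple-angle formula for the cotangent. So if `xₙ = cot tₙ`, then
`xₙ₊₁ = cot (3 tₙ)`. Since `sin 3t = sin t · (3 cos² t - sin² t)`, the condition `sin 3t ≠ 0`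
keeps both `sin t` and the denominator `3 cot² t - 1 = (3 cos² t - sin² t) / sin² t` nonzero.
-/

theorem halley_step_sq_add_one_eq {K : Type*} [Field K] [NeZero (2 : K)] (x : K)
    (h : 3 * x ^ 2 - 1 ≠ 0) :
    x - (x ^ 2 + 1) / (2 * x - (x ^ 2 + 1) * 2 / (2 * (2 * x))) =
      (x ^ 3 - 3 * x) / (3 * x ^ 2 - 1) := by
  rcases eq_or_ne x 0 with rfl | hx
  · simp -- both sides are `0`, the left one through the junk value `1 / 0 = 0`
  have hdenom : 2 * x - (x ^ 2 + 1) * 2 / (2 * (2 * x)) = (3 * x ^ 2 - 1) / (2 * x) := by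
    field_simp
    ring
  rw [hdenom, div_div_eq_mul_div, sub_div' h]
  ring

namespace Real

theorem sin_three_mul_eq_mul (t : ℝ) : sin (3 * t) = sin t * (3 * cos t ^ 2 - sin t ^ 2) := by
  rw [sin_three_mul]
  linear_combination -3 * sin t * sin_sq_add_cos_sq t

theorem cos_three_mul_eq_mul (t : ℝ) : cos (3 * t) = cos t * (cos t ^ 2 - 3 * sin t ^ 2) := by
  rw [cos_three_mul]
  linear_combination 3 * cos t * sin_sq_add_cos_sq t

theorem three_mul_cot_sq_sub_one_eq {t : ℝ} (ht : sin t ≠ 0) :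
    3 * cot t ^ 2 - 1 = (3 * cos t ^ 2 - sin t ^ 2) / sin t ^ 2 := by
  rw [cot_eq_cos_div_sin]
  field_simp

theorem three_mul_cot_sq_sub_one_ne_zero {t : ℝ} (h : sin (3 * t) ≠ 0) :
    3 * cot t ^ 2 - 1 ≠ 0 := by
  rw [sin_three_mul_eq_mul, mul_ne_zero_iff] at h
  rw [three_mul_cot_sq_sub_one_eq h.1]
  exact div_ne_zero h.2 (pow_ne_zero 2 h.1)

theorem cot_three_mul {t : ℝ} (h : sin (3 * t) ≠ 0) :
    cot (3 * t) = (cot t ^ 3 - 3 * cot t) / (3 * cot t ^ 2 - 1) := by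
  rw [sin_three_mul_eq_mul, mul_ne_zero_iff] at h
  obtain ⟨hsin, hfactor⟩ := h
  rw [three_mul_cot_sq_sub_one_eq hsin, cot_eq_cos_div_sin (3 * t), sin_three_mul_eq_mul,
    cos_three_mul_eq_mul, cot_eq_cos_div_sin]
  field_simp

end Real

theorem halley_orbit_cot_general (θ₀ : ℝ) (x : ℕ → ℝ)
    (h0 : x 0 = Real.cot θ₀)
    (hrec : ∀ n, x (n + 1) =
      x n - (x n ^ 2 + 1) / (2 * x n - (x n ^ 2 + 1) * 2 / (2 * (2 * x n))))
    (hdef : ∀ n, Real.sin (3 ^ n * θ₀) ≠ 0) :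
    (∀ n, x (n + 1) = (x n ^ 3 - 3 * x n) / (3 * x n ^ 2 - 1)) ∧
      ∀ n, x n = Real.cot (3 ^ n * θ₀) := by
  have hdef_succ (n : ℕ) : sin (3 * (3 ^ n * θ₀)) ≠ 0 := by
    simpa only [pow_succ', mul_assoc] using hdef (n + 1)
  have hcot (n : ℕ) : x n = cot (3 ^ n * θ₀) := by
    induction n with
    | zero => simpa using h0
    | succ n ih =>
      rw [hrec, ih, halley_step_sq_add_one_eq _ (three_mul_cot_sq_sub_one_ne_zero (hdef_succ n)),
        pow_succ' (3 : ℝ) n, mul_assoc, cot_three_mul (hdef_succ n)]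
  refine ⟨fun n => (hrec n).trans (halley_step_sq_add_one_eq _ ?_), hcot⟩
  rw [hcot n]
  exact three_mul_cot_sq_sub_one_ne_zero (hdef_succ n)

/-- Halley's method applied to `f(x) = x² + 1` (so `f' = 2x`, `f'' = 2`) gives
the iteration `x_{n+1} = (x_n³ - 3 x_n)/(3 x_n² - 1)`; consequently, if
`x₀ = cot θ₀` and all iterates are defined, then `x_n = cot (3ⁿ θ₀)`. -/
theorem halley_orbit_cot (θ₀ : ℝ) (x : ℕ → ℝ)
    (h0 : x 0 = Real.cot θ₀)
    (hne : ∀ n, x n ≠ 0)  -- f'(xₙ) = 2 xₙ ≠ 0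
    (hden : ∀ n, 2 * x n - (x n ^ 2 + 1) * 2 / (2 * (2 * x n)) ≠ 0)
    (hden' : ∀ n, 3 * x n ^ 2 - 1 ≠ 0)
    (hrec : ∀ n, x (n + 1) =
      x n - (x n ^ 2 + 1) / (2 * x n - (x n ^ 2 + 1) * 2 / (2 * (2 * x n))))
    (hdef : ∀ n, Real.sin (3 ^ n * θ₀) ≠ 0) :
    (∀ n, x (n + 1) = (x n ^ 3 - 3 * x n) / (3 * x n ^ 2 - 1)) ∧
      ∀ n, x n = Real.cot (3 ^ n * θ₀) :=
  halley_orbit_cot_general θ₀ x h0 hrec hdef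
end

section
/- For Halley's method applied to f(x) = x² + 1, if θ₀ = bπ with b irrational, then the sequence x_n = cot(3ⁿ bπ) has no two equal terms: x_m ≠ x_n for all m ≠ n (whenever defined). In particular the orbit is not periodic. -/
open Real

/-- For Halley's method applied to `f(x) = x² + 1`, if `θ₀ = bπ` with `b`
irrational, then the sequence `x_n = cot (3ⁿ bπ)` has no two equal terms
(whenever defined); in particular the orbit is not periodic. -/
theorem halley_orbit_injective_of_irrational (b : ℝ) (hb : Irrational b)
    (m n : ℕ) (hmn : m ≠ n)
    (hm : Real.sin (3 ^ m * (b * Real.pi)) ≠ 0)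
    (hn : Real.sin (3 ^ n * (b * Real.pi)) ≠ 0) :
    Real.cot (3 ^ m * (b * Real.pi)) ≠ Real.cot (3 ^ n * (b * Real.pi)) := by
  intro h
  set x := (3:ℝ) ^ m * (b * Real.pi) with hx
  set y := (3:ℝ) ^ n * (b * Real.pi) with hy
  rw [Real.cot_eq_cos_div_sin, Real.cot_eq_cos_div_sin] at h
  have hsub : Real.sin (x - y) = 0 := by
    rw [Real.sin_sub]
    field_simp at h
    linarith [h]
  rw [Real.sin_eq_zero_iff] at hsub
  obtain ⟨k, hk⟩ := hsub
  have hpi : Real.pi ≠ 0 := Real.pi_ne_zero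
  have hkb : (k : ℝ) = ((3:ℝ) ^ m - 3 ^ n) * b := by
    have : (k : ℝ) * Real.pi = ((3:ℝ) ^ m - 3 ^ n) * b * Real.pi := by
      rw [hk, hx, hy]; ring
    exact mul_right_cancel₀ hpi this
  have hc : ((3:ℝ) ^ m - 3 ^ n) ≠ 0 := by
    have h3 : (3:ℝ) ^ m ≠ 3 ^ n := by
      intro he
      have hN : (3:ℕ) ^ m = 3 ^ n := by exact_mod_cast he
      exact hmn (Nat.pow_right_injective (by norm_num) hN)
    intro he; apply h3; linarith
  have hbval : b = (k : ℝ) / ((3:ℝ) ^ m - 3 ^ n) := by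
    field_simp
    linarith
  apply hb
  refine ⟨(k : ℚ) / ((3:ℚ) ^ m - 3 ^ n), ?_⟩
  rw [hbval]
  push_cast
  ring
end

section
/- For f(x) = x² + 1 and any k ≥ 1, whenever x = cot θ (with all denominators nonzero), k · (1/f)^{(k-1)}(x) / (1/f)^{(k)}(x) = - sin(kθ) / (sin θ · sin((k+1)θ)). -/
/-!
Partial fractions give `1/(z²+1) = (2i)⁻¹ ((z - i)⁻¹ - (z + i)⁻¹)`, so the `n`-th derivative is
`(2i)⁻¹ (-1)ⁿ n! ((z - i)^{-(n+1)} - (z + i)^{-(n+1)})`. At `z = cot θ` one has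
`(cot θ ∓ i)⁻¹ = sin θ · e^{±iθ}`, and by De Moivre the bracket becomes `2i sinⁿ⁺¹ θ sin((n+1)θ)`.
In the quotient the common factor `(-1)ᵏ k! sinᵏ θ` cancels.
-/

open Complex Nat

section

variable {𝕜 : Type*} [NontriviallyNormedField 𝕜]

theorem iteratedDeriv_inv_sub_const (n : ℕ) (a z : 𝕜) :
    iteratedDeriv n (fun w => (w - a)⁻¹) z = (-1) ^ n * n ! * ((z - a) ^ (n + 1))⁻¹ := by
  have h := congr_fun (iter_deriv_inv_linear_sub n (1 : 𝕜) a) z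
  simp only [one_mul, one_pow, mul_one] at h
  rw [iteratedDeriv_eq_iterate, h, show (-1 - n : ℤ) = -((n + 1 : ℕ) : ℤ) by push_cast; ring,
    zpow_neg, zpow_natCast]

theorem iteratedDeriv_inv_sub_mul_sub (n : ℕ) {a b z : 𝕜} (hab : a ≠ b) (hza : z ≠ a) (hzb : z ≠ b) :
    iteratedDeriv n (fun w => ((w - a) * (w - b))⁻¹) z =
      (a - b)⁻¹ * ((-1) ^ n * n ! * (((z - a) ^ (n + 1))⁻¹ - ((z - b) ^ (n + 1))⁻¹)) := by
  have hpartial : (fun w => ((w - a) * (w - b))⁻¹) =ᶠ[nhds z]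
      fun w => (a - b)⁻¹ * ((w - a)⁻¹ - (w - b)⁻¹) := by
    filter_upwards [isOpen_ne.mem_nhds hza, isOpen_ne.mem_nhds hzb] with w hwa hwb
    field_simp [sub_ne_zero.2 hab, sub_ne_zero.2 hwa, sub_ne_zero.2 hwb]
    ring
  have hsmooth (c : 𝕜) (hc : z ≠ c) : ContDiffAt 𝕜 n (fun w => (w - c)⁻¹) z :=
    ((contDiffAt_id.sub contDiffAt_const).inv (sub_ne_zero.2 hc))
  rw [hpartial.iteratedDeriv_eq, iteratedDeriv_const_mul_field,
    iteratedDeriv_fun_sub (hsmooth a hza) (hsmooth b hzb),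
    iteratedDeriv_inv_sub_const, iteratedDeriv_inv_sub_const]
  ring

end

theorem inv_cot_sub_I {θ : ℂ} (hs : sin θ ≠ 0) : (cot θ - I)⁻¹ = sin θ * exp (θ * I) := by
  refine inv_eq_of_mul_eq_one_right ?_
  rw [cot_eq_cos_div_sin, exp_mul_I]
  field_simp
  linear_combination cos_sq_add_sin_sq θ - sin θ ^ 2 * I_sq

theorem inv_cot_add_I {θ : ℂ} (hs : sin θ ≠ 0) : (cot θ + I)⁻¹ = sin θ * exp (-θ * I) := by
  refine inv_eq_of_mul_eq_one_right ?_
  rw [cot_eq_cos_div_sin, exp_mul_I, cos_neg, sin_neg]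
  field_simp
  linear_combination cos_sq_add_sin_sq θ - sin θ ^ 2 * I_sq

theorem exp_mul_I_pow_sub_exp_neg_mul_I_pow (θ : ℂ) (m : ℕ) :
    exp (θ * I) ^ m - exp (-θ * I) ^ m = 2 * I * sin (m * θ) := by
  rw [← exp_nat_mul, ← exp_nat_mul]
  linear_combination (norm := ring_nf)
    -I * two_sin (m * θ) + (exp (m * θ * I) - exp (-(m * θ) * I)) * I_sq

theorem iteratedDeriv_inv_sq_add_one_cot (n : ℕ) {θ : ℂ} (hs : sin θ ≠ 0) :
    iteratedDeriv n (fun z : ℂ => (z ^ 2 + 1)⁻¹) (cot θ) =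
      (-1) ^ n * n ! * sin θ ^ (n + 1) * sin ((n + 1 : ℂ) * θ) := by
  have hfactor : (fun z : ℂ => (z ^ 2 + 1)⁻¹) = fun z => ((z - I) * (z - -I))⁻¹ := by
    funext z
    rw [show z ^ 2 + 1 = (z - I) * (z - -I) by linear_combination I_sq]
  have hsubI : cot θ ≠ I := fun h => mul_ne_zero hs (exp_ne_zero (θ * I)) <| by
    rw [← inv_cot_sub_I hs, h, sub_self, inv_zero]
  have haddI : cot θ ≠ -I := fun h => mul_ne_zero hs (exp_ne_zero (-θ * I)) <| by
    rw [← inv_cot_add_I hs, h, neg_add_cancel, inv_zero]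
  rw [hfactor, iteratedDeriv_inv_sub_mul_sub n (by simp [self_eq_neg]) hsubI haddI,
    sub_neg_eq_add, sub_neg_eq_add, ← inv_pow, ← inv_pow, inv_cot_sub_I hs, inv_cot_add_I hs,
    mul_pow, mul_pow, ← mul_sub, exp_mul_I_pow_sub_exp_neg_mul_I_pow]
  push_cast
  field_simp
  ring

theorem natCast_mul_iteratedDeriv_pred_inv_sq_add_one_cot (k : ℕ) {θ : ℂ} (hs : sin θ ≠ 0) :
    (k : ℂ) * iteratedDeriv (k - 1) (fun z : ℂ => (z ^ 2 + 1)⁻¹) (cot θ) =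
      -((-1) ^ k * k ! * sin θ ^ k) * sin (k * θ) := by
  cases k with
  | zero => simp
  | succ n =>
    rw [Nat.add_sub_cancel, iteratedDeriv_inv_sq_add_one_cot n hs, factorial_succ]
    push_cast
    ring

theorem householder_correction_term_general (k : ℕ) (θ x : ℂ)
    (hs : Complex.sin θ ≠ 0)
    (hx : x = Complex.cot θ) :
    (k : ℂ) * iteratedDeriv (k - 1) (fun z : ℂ => (z ^ 2 + 1)⁻¹) x /
        iteratedDeriv k (fun z : ℂ => (z ^ 2 + 1)⁻¹) x =
      -Complex.sin ((k : ℂ) * θ) /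
        (Complex.sin θ * Complex.sin ((k + 1 : ℂ) * θ)) := by
  subst hx
  have hc : (-1 : ℂ) ^ k * k ! * sin θ ^ k ≠ 0 := by simp [hs, factorial_ne_zero]
  rw [natCast_mul_iteratedDeriv_pred_inv_sq_add_one_cot k hs,
    iteratedDeriv_inv_sq_add_one_cot k hs, pow_succ, ← mul_assoc, mul_assoc _ (sin θ),
    neg_mul, neg_div, mul_div_mul_left _ _ hc, neg_div]

/-- Key computation for the Householder iteration on `f(x) = x² + 1`:
whenever `x = cot θ` (with all denominators nonzero),
`k (1/f)^{(k-1)}(x) / (1/f)^{(k)}(x) = - sin(kθ)/(sin θ sin((k+1)θ))`. -/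
theorem householder_correction_term (k : ℕ) (hk : 1 ≤ k) (θ x : ℂ)
    (hs : Complex.sin θ ≠ 0) (hs' : Complex.sin ((k + 1 : ℂ) * θ) ≠ 0)
    (hx : x = Complex.cot θ)
    (hne : iteratedDeriv k (fun z : ℂ => (z ^ 2 + 1)⁻¹) x ≠ 0) :
    (k : ℂ) * iteratedDeriv (k - 1) (fun z : ℂ => (z ^ 2 + 1)⁻¹) x /
        iteratedDeriv k (fun z : ℂ => (z ^ 2 + 1)⁻¹) x =
      -Complex.sin ((k : ℂ) * θ) /
        (Complex.sin θ * Complex.sin ((k + 1 : ℂ) * θ)) :=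
  householder_correction_term_general k θ x hs hx
end

section
/- Schröder's third-order (first-kind) method applied to f(x) = x² + 1 gives the iteration x_{n+1} = G(x_n) with G(x) = (3x⁴ - 6x² - 1)/(8x³), and this iteration coincides exactly with Newton's iteration applied to F(x) = (x² + 1)(5x² + 1)^{-1/5}, i.e. x - F(x)/F'(x) = G(x) wherever defined. -/
open Real

/-- Schröder's third-order (first-kind) method applied to `f(x) = x² + 1`
gives the iteration `x_{n+1} = G(x_n)` with `G(x) = (3x⁴ - 6x² - 1)/(8x³)`,
and this iteration coincides exactly with Newton's iteration applied to
`F(x) = (x² + 1)(5x² + 1)^{-1/5}` wherever defined. -/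
theorem schroder_as_newton (x : ℝ) (hx : x ≠ 0) :
    (x - (x ^ 2 + 1) / (2 * x) - 2 * (x ^ 2 + 1) ^ 2 / (2 * (2 * x) ^ 3) =
        (3 * x ^ 4 - 6 * x ^ 2 - 1) / (8 * x ^ 3)) ∧
      (x - (fun t : ℝ => (t ^ 2 + 1) * (5 * t ^ 2 + 1) ^ (-(1 / 5) : ℝ)) x /
          deriv (fun t : ℝ => (t ^ 2 + 1) * (5 * t ^ 2 + 1) ^ (-(1 / 5) : ℝ)) x =
        (3 * x ^ 4 - 6 * x ^ 2 - 1) / (8 * x ^ 3)) := by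
  have hpos : (0:ℝ) < 5 * x ^ 2 + 1 := by positivity
  constructor
  · field_simp
    ring
  · -- compute the derivative
    have hg : HasDerivAt (fun t : ℝ => 5 * t ^ 2 + 1) (10 * x) x := by
      have := ((hasDerivAt_pow 2 x).const_mul (5:ℝ)).add_const 1
      simpa using this.congr_deriv (by ring)
    have hr : HasDerivAt (fun t : ℝ => (5 * t ^ 2 + 1) ^ (-(1 / 5) : ℝ))
        (10 * x * (-(1 / 5)) * (5 * x ^ 2 + 1) ^ ((-(1 / 5) : ℝ) - 1)) x :=
      hg.rpow_const (Or.inl hpos.ne')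
    have hp : HasDerivAt (fun t : ℝ => t ^ 2 + 1) (2 * x) x := by
      simpa using (hasDerivAt_pow 2 x).add_const 1
    have hF : HasDerivAt (fun t : ℝ => (t ^ 2 + 1) * (5 * t ^ 2 + 1) ^ (-(1 / 5) : ℝ))
        (2 * x * (5 * x ^ 2 + 1) ^ (-(1 / 5) : ℝ) +
          (x ^ 2 + 1) * (10 * x * (-(1 / 5)) * (5 * x ^ 2 + 1) ^ ((-(1 / 5) : ℝ) - 1))) x :=
      hp.mul hr
    -- simplify the derivative to 8x³ (5x²+1)^(-6/5)
    have key : (5 * x ^ 2 + 1) ^ (-(1 / 5) : ℝ) =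
        (5 * x ^ 2 + 1) * (5 * x ^ 2 + 1) ^ ((-(1 / 5) : ℝ) - 1) := by
      rw [← Real.rpow_one_add' hpos.le (by norm_num)]
      norm_num
    have hderiv : deriv (fun t : ℝ => (t ^ 2 + 1) * (5 * t ^ 2 + 1) ^ (-(1 / 5) : ℝ)) x =
        8 * x ^ 3 * (5 * x ^ 2 + 1) ^ ((-(1 / 5) : ℝ) - 1) := by
      rw [hF.deriv, key]; ring
    have hrne : (5 * x ^ 2 + 1) ^ ((-(1 / 5) : ℝ) - 1) ≠ 0 :=
      (Real.rpow_pos_of_pos hpos _).ne'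
    rw [hderiv]
    simp only
    rw [key]
    have h8 : (8 : ℝ) * x ^ 3 ≠ 0 := by positivity
    field_simp
    ring
end

section
/- Suppose S is a function with asymptotic behaviour S(θ) = c·θ^{-α} + o(θ^{-α}) as θ → 0, with c ≠ 0 and α > 0, satisfying the functional equation S(3θ) = G(S(θ)) near θ = 0, where G(x) = (3x⁴ - 6x² - 1)/(8x³). Then necessarily 3^{-α} = 3/8, i.e. α = ln(8/3)/ln 3. -/
/-!
Multiply the functional equation by `θ ^ α`. Since `S θ * θ ^ α → c`, the left side
`S (3θ) * θ ^ α` tends to `c * 3 ^ (-α)`. On the right, `G x = 3/8 x - 3/(4x) - 1/(8x³)`, so with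
`x = S θ`, `x * θ ^ α → c ≠ 0` and `θ ^ α → 0` the correction terms vanish and
`G (S θ) * θ ^ α → 3/8 c`.
-/

open Real Filter Asymptotics Topology

/-- The map `G` of the statement: Schröder's third-order iteration map for `x² + 1`. -/
noncomputable def schroderMap (x : ℝ) : ℝ := (3 * x ^ 4 - 6 * x ^ 2 - 1) / (8 * x ^ 3)

-- Holds without side conditions: at `x = 0` or `t = 0` both sides are junk zeros.
lemma schroderMap_mul (x t : ℝ) :
    schroderMap x * t =
      3 / 8 * (x * t) - 3 / 4 * (t ^ 2 / (x * t)) - 1 / 8 * (t ^ 4 / (x * t) ^ 3) := by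
  unfold schroderMap
  rcases eq_or_ne x 0 with rfl | hx
  · simp
  rcases eq_or_ne t 0 with rfl | ht
  · simp
  field_simp
  ring

lemma Filter.Tendsto.schroderMap_mul {ι : Type*} {l : Filter ι} {x t : ι → ℝ} {c : ℝ}
    (hc : c ≠ 0) (hxt : Tendsto (fun i => x i * t i) l (𝓝 c)) (ht : Tendsto t l (𝓝 0)) :
    Tendsto (fun i => schroderMap (x i) * t i) l (𝓝 (3 / 8 * c)) := by
  have h2 := (ht.pow 2).div hxt hc
  have h4 := (ht.pow 4).div (hxt.pow 3) (pow_ne_zero 3 hc)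
  simp_rw [_root_.schroderMap_mul]
  convert ((hxt.const_mul (3 / 8)).sub (h2.const_mul (3 / 4))).sub (h4.const_mul (1 / 8))
    using 2 <;> simp

lemma tendsto_mul_rpow_of_isLittleO {S : ℝ → ℝ} {c α : ℝ}
    (h : (fun θ => S θ - c * θ ^ (-α)) =o[𝓝[>] 0] fun θ => θ ^ (-α)) :
    Tendsto (fun θ => S θ * θ ^ α) (𝓝[>] 0) (𝓝 c) := by
  have := h.tendsto_div_nhds_zero.add_const c
  rw [zero_add] at this
  refine this.congr' ?_
  filter_upwards [self_mem_nhdsWithin] with θ (hθ : 0 < θ)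
  have hθα : 0 < θ ^ α := rpow_pos_of_pos hθ α
  rw [rpow_neg hθ.le]
  field_simp
  ring

lemma Filter.Tendsto.comp_const_mul_mul_rpow {S : ℝ → ℝ} {c α k : ℝ} (hk : 0 < k)
    (h : Tendsto (fun θ => S θ * θ ^ α) (𝓝[>] 0) (𝓝 c)) :
    Tendsto (fun θ => S (k * θ) * θ ^ α) (𝓝[>] 0) (𝓝 (c * k ^ (-α))) := by
  have hscale : Tendsto (k * ·) (𝓝[>] 0) (𝓝[>] 0) :=
    tendsto_iff_comap.2 (comap_mulLeft_nhdsGT_zero hk).ge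
  refine ((h.comp hscale).mul_const (k ^ (-α))).congr' ?_
  filter_upwards [self_mem_nhdsWithin] with θ (hθ : 0 < θ)
  have : k ^ α * k ^ (-α) = 1 := by rw [← rpow_add hk, add_neg_cancel, rpow_zero]
  simp only [Function.comp_apply, mul_rpow hk.le hθ.le]
  linear_combination (S (k * θ) * θ ^ α) * this

lemma eq_log_div_log_of_rpow_neg_eq_inv {b y α : ℝ} (hb₀ : 0 < b) (hb₁ : b ≠ 1)
    (h : b ^ (-α) = y⁻¹) : α = log y / log b := by
  have hlog := congrArg log h
  rw [log_rpow hb₀, log_inv] at hlog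
  rw [eq_div_iff (log_ne_zero_of_pos_of_ne_one hb₀ hb₁)]
  linarith

/-- If `S(θ) = c θ^{-α} + o(θ^{-α})` as `θ → 0⁺`, with `c ≠ 0`, `α > 0`, and
`S` satisfies the functional equation `S(3θ) = G(S(θ))` near `θ = 0`, where
`G(x) = (3x⁴ - 6x² - 1)/(8x³)`, then necessarily `3^{-α} = 3/8`,
i.e. `α = ln(8/3)/ln 3`. -/
theorem schroder_no_simple_S (S : ℝ → ℝ) (c α : ℝ) (hc : c ≠ 0) (hα : 0 < α)
    (hasymp : (fun θ => S θ - c * θ ^ (-α)) =o[nhdsWithin 0 (Set.Ioi 0)]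
      fun θ => θ ^ (-α))
    (hfe : ∀ᶠ θ in nhdsWithin 0 (Set.Ioi 0),
      S (3 * θ) = (3 * S θ ^ 4 - 6 * S θ ^ 2 - 1) / (8 * S θ ^ 3)) :
    (3 : ℝ) ^ (-α) = 3 / 8 ∧ α = Real.log (8 / 3) / Real.log 3 := by
  have hA := tendsto_mul_rpow_of_isLittleO hasymp
  have ht : Tendsto (fun θ : ℝ => θ ^ α) (𝓝[>] 0) (𝓝 0) :=
    ((continuous_rpow_const hα.le).tendsto' 0 0 (zero_rpow hα.ne')).mono_left
      nhdsWithin_le_nhds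
  have hG : Tendsto (fun θ => S (3 * θ) * θ ^ α) (𝓝[>] 0) (𝓝 (3 / 8 * c)) :=
    (hA.schroderMap_mul hc ht).congr' <| by
      filter_upwards [hfe] with θ hθ
      rw [hθ, schroderMap]
  have hlim : c * 3 ^ (-α) = c * (3 / 8) := by
    rw [tendsto_nhds_unique (hA.comp_const_mul_mul_rpow three_pos) hG]
    ring
  have hpow := mul_left_cancel₀ hc hlim
  exact ⟨hpow, eq_log_div_log_of_rpow_neg_eq_inv three_pos (by norm_num) (by rw [hpow]; norm_num)⟩
end
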